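/- Let j, k, n be positive integers with 1 ≤ j ≤ k ≤ n, h = j+k+n+1, and n ≥ ⌊h/2⌋+1. Then Mo(P_L(j,k,n)) − Mo(C_L(2,h−3)) = 24·((j+n)(k−2) + k(j−1) + 2); this is positive when k ≥ 2, and when j = k = 1 (with n ≥ 4) it equals 24(1−n) < 0. -/

import Mathlib

/-
Once `n` exceeds `⌊h/2⌋`, every sum in the cut-method formula for `Mo(P_L(j,k,n))` is an
arithmetic progression, except the two sums over the long branch, whose summands `|A - 2i|`
change sign at `i = ⌊A/2⌋`; splitting them there gives a closed form for the Mostar index that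
depends on `h` only through its parity. Comparing with the closed form of `Mo(C_L(2,h−3))`,
after eliminating `n = h - j - k - 1`, leaves the stated polynomial.
-/

open Finset

/-- The Mostar index of the tree-like phenylene `P_L(j,k,n)`, via the cut method. -/
def MoPL (j k n : ℕ) : ℤ :=
  let h : ℕ := j + k + n + 1
  6 * (2 * ((j : ℤ) + 1) * ((n : ℤ) - (k : ℤ)) +
       2 * ((k : ℤ) + 1) * ((n : ℤ) - (j : ℤ)) +
       2 * ((n : ℤ) + 1) * ((k : ℤ) - (j : ℤ)) +
       4 * ∑ i ∈ Finset.Icc 1 j, ((h : ℤ) + 1 - 2 * (i : ℤ)) +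
       4 * ∑ i ∈ Finset.Icc 1 k, ((h : ℤ) + 1 - 2 * (i : ℤ)) +
       4 * ∑ i ∈ Finset.Icc 1 n, |(h : ℤ) + 1 - 2 * (i : ℤ)| +
       2 * ∑ i ∈ Finset.Icc 1 j, ((h : ℤ) - 2 * (i : ℤ)) +
       2 * ∑ i ∈ Finset.Icc 1 k, ((h : ℤ) - 2 * (i : ℤ)) +
       2 * ∑ i ∈ Finset.Icc 1 n, |(h : ℤ) - 2 * (i : ℤ)|)

/-- The Mostar index of the phenylene chain `C_L(2, h−3)` (closed form). -/
def MoCL2 (h : ℕ) : ℤ :=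
  72 * ((h / 2 : ℕ) : ℤ) * (((h + 1) / 2 : ℕ) : ℤ) - 24 * ((h / 2 : ℕ) : ℤ) +
    48 * ((h : ℤ) - 2)

theorem sum_Icc_sub_two_mul (A : ℤ) (m : ℕ) :
    ∑ i ∈ Icc 1 m, (A - 2 * (i : ℤ)) = m * A - m * (m + 1) := by
  induction m with
  | zero => simp
  | succ m ih =>
    rw [sum_Icc_succ_top (by omega), ih]
    push_cast
    ring

theorem sum_Icc_abs_sub_two_mul (A : ℤ) {t m : ℕ} (hAt : A / 2 = t) (htm : t ≤ m) :
    ∑ i ∈ Icc 1 m, |A - 2 * (i : ℤ)| = 2 * (t * A - t * (t + 1)) - (m * A - m * (m + 1)) := by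
  induction m, htm using Nat.le_induction with
  | base =>
    rw [← sum_Icc_sub_two_mul]
    have hsum : ∑ i ∈ Icc 1 t, |A - 2 * (i : ℤ)| = ∑ i ∈ Icc 1 t, (A - 2 * (i : ℤ)) :=
      sum_congr rfl fun i hi => abs_of_nonneg (by have := (mem_Icc.mp hi).2; omega)
    rw [hsum]
    ring
  | succ m htm ih =>
    rw [sum_Icc_succ_top (by omega), ih, abs_of_neg (by push_cast; omega)]
    push_cast
    ring

theorem MoPL_eq_of_half_lt {j k n : ℕ} (hn : (j + k + n + 1) / 2 < n) :
    MoPL j k n = 6 * (4 * j + 3 * j ^ 2 + 8 * k + 3 * k ^ 2 + 4 * n + 3 * n ^ 2 + 14 * k * j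
      + 6 * j * n + 10 * k * n + if Even (j + k + n + 1) then 1 else 0) := by
  set h := j + k + n + 1 with hh
  have hcast : (h : ℤ) = j + k + n + 1 := by push_cast [hh]; ring
  rw [MoPL, ← hh, sum_Icc_sub_two_mul, sum_Icc_sub_two_mul, sum_Icc_sub_two_mul,
    sum_Icc_sub_two_mul, sum_Icc_abs_sub_two_mul _ (t := (h + 1) / 2) (by omega) (by omega),
    sum_Icc_abs_sub_two_mul _ (t := h / 2) (by omega) (by omega)]
  rcases Nat.even_or_odd h with hpar | hpar
  · obtain ⟨q, hq⟩ := hpar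
    rw [if_pos ⟨q, hq⟩, show h / 2 = q by omega, show (h + 1) / 2 = q by omega,
      hcast, show (n : ℤ) = 2 * q - j - k - 1 by omega]
    ring
  · obtain ⟨q, hq⟩ := hpar
    rw [if_neg (Nat.not_even_iff_odd.mpr ⟨q, hq⟩), show h / 2 = q by omega,
      show (h + 1) / 2 = q + 1 by omega, hcast, show (n : ℤ) = 2 * q - j - k by omega]
    push_cast
    ring

theorem MoPL_sub_MoCL2_of_half_lt {j k n : ℕ} (hn : (j + k + n + 1) / 2 < n) :
    MoPL j k n - MoCL2 (j + k + n + 1) =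
      24 * (((j : ℤ) + n) * ((k : ℤ) - 2) + (k : ℤ) * ((j : ℤ) - 1) + 2) := by
  rw [MoPL_eq_of_half_lt hn, MoCL2]
  rcases Nat.even_or_odd (j + k + n + 1) with hpar | hpar
  · obtain ⟨q, hq⟩ := hpar
    rw [if_pos ⟨q, hq⟩, hq, show (q + q) / 2 = q by omega, show (q + q + 1) / 2 = q by omega,
      show (n : ℤ) = 2 * q - j - k - 1 by omega]
    push_cast
    ring
  · obtain ⟨q, hq⟩ := hpar
    rw [if_neg (Nat.not_even_iff_odd.mpr ⟨q, hq⟩), hq, show (2 * q + 1) / 2 = q by omega,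
      show (2 * q + 1 + 1) / 2 = q + 1 by omega, show (n : ℤ) = 2 * q - j - k by omega]
    push_cast
    ring

theorem lemma52_case2_general (j k n h : ℕ) (hj : 1 ≤ j)
    (hh : h = j + k + n + 1) (hn : h / 2 + 1 ≤ n) :
    MoPL j k n - MoCL2 h =
      24 * (((j : ℤ) + (n : ℤ)) * ((k : ℤ) - 2) + (k : ℤ) * ((j : ℤ) - 1) + 2) ∧
    (2 ≤ k →
      (0 : ℤ) < 24 * (((j : ℤ) + (n : ℤ)) * ((k : ℤ) - 2) + (k : ℤ) * ((j : ℤ) - 1) + 2)) ∧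
    (j = 1 → k = 1 → 4 ≤ n →
      24 * (((j : ℤ) + (n : ℤ)) * ((k : ℤ) - 2) + (k : ℤ) * ((j : ℤ) - 1) + 2) =
        24 * (1 - (n : ℤ)) ∧ 24 * (1 - (n : ℤ)) < 0) := by
  subst hh
  refine ⟨MoPL_sub_MoCL2_of_half_lt (by omega), fun hk => ?_, ?_⟩
  · have hjn : 0 ≤ ((j : ℤ) + n) * ((k : ℤ) - 2) := mul_nonneg (by positivity) (by omega)
    have hkj : 0 ≤ (k : ℤ) * ((j : ℤ) - 1) := mul_nonneg (by positivity) (by omega)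
    omega
  · rintro rfl rfl hn4
    constructor
    · push_cast
      ring
    · omega

/-- Case 2 of Lemma 5.2: for `n ≥ ⌊h/2⌋+1`,
`Mo(P_L(j,k,n)) − Mo(C_L(2,h−3)) = 24((j+n)(k−2) + k(j−1) + 2)`, positive when `k ≥ 2`,
and equal to `24(1−n) < 0` when `j = k = 1` with `n ≥ 4`. -/
theorem lemma52_case2 (j k n h : ℕ) (hj : 1 ≤ j) (hjk : j ≤ k) (hkn : k ≤ n)
    (hh : h = j + k + n + 1) (hn : h / 2 + 1 ≤ n) :
    MoPL j k n - MoCL2 h =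
      24 * (((j : ℤ) + (n : ℤ)) * ((k : ℤ) - 2) + (k : ℤ) * ((j : ℤ) - 1) + 2) ∧
    (2 ≤ k →
      (0 : ℤ) < 24 * (((j : ℤ) + (n : ℤ)) * ((k : ℤ) - 2) + (k : ℤ) * ((j : ℤ) - 1) + 2)) ∧
    (j = 1 → k = 1 → 4 ≤ n →
      24 * (((j : ℤ) + (n : ℤ)) * ((k : ℤ) - 2) + (k : ℤ) * ((j : ℤ) - 1) + 2) =
        24 * (1 - (n : ℤ)) ∧ 24 * (1 - (n : ℤ)) < 0) :=
  lemma52_case2_general j k n h hj hh hn
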